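/- arXiv:2503.03065 — 4 statements merged into one kernel-verified Lean document; each statement's English description precedes it below -/
import Mathlib

section
/- Under the stated assumptions, the scaled width of the test-inversion confidence set converges to the asymptotic standard error of the median, scaled by twice the critical value: √n·(U_n − L_n) → 2·z·σ/f as n → ∞; equivalently, the Wald approximation √n·(U_n − L_n)/(2z) converges to σ/f. (This is the deterministic core of Proposition 1: applied along almost every sample path of the Kaplan–Meier process, it shows that the Wald approximation applied to Brookmeyer–Crowley confidence intervals consistently estimates the asymptotic standard error σ(m)/f(m) of the Kaplan–Meier median estimator.) -/
open Filter Topology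

lemma wald_aux_sqrt_nat : Tendsto (fun n : ℕ => Real.sqrt n) atTop atTop := by
  apply tendsto_atTop_atTop.2
  intro c
  refine ⟨⌈c^2⌉₊, fun n hn => ?_⟩
  have h1 : (c^2 : ℝ) ≤ n := le_trans (Nat.le_ceil _) (by exact_mod_cast hn)
  calc c ≤ |c| := le_abs_self c
    _ = Real.sqrt (c^2) := (Real.sqrt_sq_eq_abs c).symm
    _ ≤ Real.sqrt n := Real.sqrt_le_sqrt h1

lemma wald_aux_bdd_mul_null {p q : ℕ → ℝ} {K : ℝ} (hp : ∀ n, |p n| ≤ K)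
    (hq : Tendsto q atTop (𝓝 0)) : Tendsto (fun n => p n * q n) atTop (𝓝 0) := by
  refine squeeze_zero_norm (a := fun n => K * ‖q n‖) (fun n => ?_)
    (by simpa using (hq.norm.const_mul K))
  rw [norm_mul]
  exact mul_le_mul_of_nonneg_right (hp n) (norm_nonneg _)

noncomputable def waldPsi (S : ℝ → ℝ) (m f : ℝ) : ℝ → ℝ :=
  fun t => if t = m then -f else (S t - S m) / (t - m)

lemma waldPsi_spec {S : ℝ → ℝ} {m f : ℝ} (hSm : S m = 1/2) (t : ℝ) :
    S t - 1/2 = waldPsi S m f t * (t - m) := by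
  unfold waldPsi
  by_cases h : t = m
  · simp [h, hSm]
  · rw [if_neg h, div_mul_cancel₀ _ (sub_ne_zero.2 h), hSm]

lemma waldPsi_tendsto {S : ℝ → ℝ} {m f : ℝ} (hd : HasDerivAt S (-f) m) :
    Tendsto (waldPsi S m f) (𝓝 m) (𝓝 (-f)) := by
  rw [← nhdsNE_sup_pure m, tendsto_sup]
  constructor
  · have h := hasDerivAt_iff_tendsto_slope.1 hd
    apply h.congr'
    filter_upwards [self_mem_nhdsWithin] with x hx
    simp only [Set.mem_compl_iff, Set.mem_singleton_iff] at hx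
    rw [slope_def_field, waldPsi, if_neg hx]
  · have h0 : waldPsi S m f m = -f := by simp [waldPsi]
    simpa [h0] using tendsto_pure_nhds (waldPsi S m f) m

set_option maxHeartbeats 1600000 in
theorem wald_approximation_consistency
    (a m b f σ z : ℝ) (hab : a < m) (hmb : m < b)
    (hf : 0 < f) (hσ : 0 < σ) (hz : 0 < z)
    (S : ℝ → ℝ)
    (hScont : ContinuousOn S (Set.Icc a b))
    (hSanti : StrictAntiOn S (Set.Icc a b))
    (hSm : S m = 1/2)
    (hSderiv : HasDerivAt S (-f) m)
    (Sn σn : ℕ → ℝ → ℝ)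
    (hunif : TendstoUniformlyOn Sn S atTop (Set.Icc a b))
    (hequi : ∀ t : ℕ → ℝ, Tendsto t atTop (𝓝 m) →
      Tendsto (fun n : ℕ => Real.sqrt n * ((Sn n (t n) - S (t n)) - (Sn n m - 1/2)))
        atTop (𝓝 0))
    (hbdd : ∃ M : ℝ, ∀ n : ℕ, |Real.sqrt n * (Sn n m - 1/2)| ≤ M)
    (hσconv : ∀ t : ℕ → ℝ, Tendsto t atTop (𝓝 m) →
      Tendsto (fun n => σn n (t n)) atTop (𝓝 σ))
    (hσbdd : ∃ B : ℝ, ∀ n, ∀ t ∈ Set.Icc a b, 0 ≤ σn n t ∧ σn n t ≤ B)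
    (hSmono : ∀ n, AntitoneOn (Sn n) (Set.Icc a b))
    (C : ℕ → Set ℝ)
    (hC : ∀ n, C n = {t | t ∈ Set.Icc a b ∧ |Sn n t - 1/2| ≤ z * σn n t / Real.sqrt n})
    (hCne : ∀ n, (C n).Nonempty)
    (L U : ℕ → ℝ)
    (hL : ∀ n, L n = sInf (C n))
    (hU : ∀ n, U n = sSup (C n)) :
    Tendsto (fun n : ℕ => Real.sqrt n * (U n - L n)) atTop (𝓝 (2 * z * σ / f)) ∧
    Tendsto (fun n : ℕ => Real.sqrt n * (U n - L n) / (2 * z)) atTop (𝓝 (σ / f)) := by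
  obtain ⟨M, hM⟩ := hbdd
  obtain ⟨B, hB⟩ := hσbdd
  have hM0 : 0 ≤ M := le_trans (abs_nonneg _) (hM 0)
  have hmA : m ∈ Set.Icc a b := ⟨hab.le, hmb.le⟩
  have hsubC : ∀ n, C n ⊆ Set.Icc a b := by
    intro n t ht; rw [hC n] at ht; exact ht.1
  have hbA : ∀ n, BddAbove (C n) := fun n => BddAbove.mono (hsubC n) bddAbove_Icc
  have hbB : ∀ n, BddBelow (C n) := fun n => BddBelow.mono (hsubC n) bddBelow_Icc
  set ψ := waldPsi S m f with hψdef
  have hψ_eq : ∀ t, S t - 1/2 = ψ t * (t - m) := waldPsi_spec hSm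
  have tψ : Tendsto ψ (𝓝 m) (𝓝 (-f)) := waldPsi_tendsto hSderiv
  -- Step A: confidence sets localize near m
  have hA : ∀ δ : ℝ, 0 < δ → ∀ᶠ n in atTop, ∀ t ∈ C n, |t - m| < δ := by
    intro δ hδ
    by_cases hK : (Set.Icc a b \ Set.Ioo (m - δ) (m + δ)).Nonempty
    · obtain ⟨x₀, hx₀K, hx₀min'⟩ := (isCompact_Icc.diff isOpen_Ioo).exists_isMinOn hK
        (((hScont.mono Set.diff_subset).sub continuousOn_const).abs)
      have hx₀min : ∀ t ∈ Set.Icc a b \ Set.Ioo (m - δ) (m + δ), |S x₀ - 1/2| ≤ |S t - 1/2| :=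
        fun t ht => hx₀min' ht
      have hx₀ne : x₀ ≠ m := by
        intro h
        exact hx₀K.2 (h ▸ ⟨by linarith, by linarith⟩)
      have hcpos : 0 < |S x₀ - 1/2| := by
        rw [abs_pos, sub_ne_zero]
        rcases lt_or_gt_of_ne hx₀ne with h | h
        · have h2 := hSanti hx₀K.1 hmA h
          rw [hSm] at h2; exact ne_of_gt h2
        · have h2 := hSanti hmA hx₀K.1 h
          rw [hSm] at h2; exact ne_of_lt h2
      set c := |S x₀ - 1/2| with hcdef
      have h1 : ∀ᶠ n in atTop, ∀ x ∈ Set.Icc a b, dist (S x) (Sn n x) < c/2 :=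
        (Metric.tendstoUniformlyOn_iff.1 hunif) (c/2) (by linarith)
      have h2 : Tendsto (fun n : ℕ => z * B / Real.sqrt n) atTop (𝓝 0) :=
        tendsto_const_nhds.div_atTop wald_aux_sqrt_nat
      have h3 := h2.eventually_lt_const (show (0:ℝ) < c/2 by linarith)
      filter_upwards [h1, h3, eventually_ge_atTop 1] with n hn1 hn3 hn4 t htC
      by_contra hcon
      push_neg at hcon
      have htI : t ∈ Set.Icc a b := hsubC n htC
      have htK : t ∈ Set.Icc a b \ Set.Ioo (m - δ) (m + δ) := by
        refine ⟨htI, fun hIoo => ?_⟩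
        exact absurd (abs_sub_lt_iff.2 ⟨by linarith [hIoo.2], by linarith [hIoo.1]⟩)
          (not_lt.2 hcon)
      have hm1 : c ≤ |S t - 1/2| := hx₀min t htK
      rw [hC n] at htC
      obtain ⟨_, htle⟩ := htC
      have hn1' : (1:ℝ) ≤ (n:ℝ) := by exact_mod_cast hn4
      have hsq : (0:ℝ) < Real.sqrt n := Real.sqrt_pos.2 (by linarith)
      have hσt := hB n t htI
      have hdd : z * σn n t / Real.sqrt n ≤ z * B / Real.sqrt n := by gcongr; exact hσt.2
      have hd := hn1 t htI
      rw [Real.dist_eq] at hd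
      have habs : |S t - 1/2| - |S t - Sn n t| ≤ |Sn n t - 1/2| := by
        have h5 := abs_sub_abs_le_abs_sub (S t - 1/2) (S t - Sn n t)
        have h6 : (S t - 1/2) - (S t - Sn n t) = Sn n t - 1/2 := by ring
        rw [h6] at h5
        exact h5
      linarith
    · apply Filter.Eventually.of_forall
      intro n t htC
      have htI := hsubC n htC
      have hIoo : t ∈ Set.Ioo (m - δ) (m + δ) := by
        by_contra h
        exact hK ⟨t, htI, h⟩
      rw [abs_sub_lt_iff]
      exact ⟨by linarith [hIoo.2], by linarith [hIoo.1]⟩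
  -- any selection from C n converges to m
  have hseq : ∀ w : ℕ → ℝ, (∀ n, w n ∈ C n) → Tendsto w atTop (𝓝 m) := by
    intro w hw
    rw [Metric.tendsto_nhds]
    intro ε hε
    filter_upwards [hA ε hε] with n hn
    rw [Real.dist_eq]
    exact hn (w n) (hw n)
  -- choose near-extremal points
  have hex_t : ∀ n : ℕ, ∃ x, x ∈ C n ∧ sSup (C n) - 1/((n:ℝ)+1) < x := by
    intro n
    have hp : (0:ℝ) < 1/((n:ℝ)+1) := by positivity
    obtain ⟨x, hx1, hx2⟩ := exists_lt_of_lt_csSup (hCne n)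
      (show sSup (C n) - 1/((n:ℝ)+1) < sSup (C n) by linarith)
    exact ⟨x, hx1, hx2⟩
  choose tq htqC htqgt using hex_t
  have hex_s : ∀ n : ℕ, ∃ x, x ∈ C n ∧ x < sInf (C n) + 1/((n:ℝ)+1) := by
    intro n
    have hp : (0:ℝ) < 1/((n:ℝ)+1) := by positivity
    obtain ⟨x, hx1, hx2⟩ := exists_lt_of_csInf_lt (hCne n)
      (show sInf (C n) < sInf (C n) + 1/((n:ℝ)+1) by linarith)
    exact ⟨x, hx1, hx2⟩
  choose sq hsqC hsqlt using hex_s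
  have htm : Tendsto tq atTop (𝓝 m) := hseq tq htqC
  have hsm : Tendsto sq atTop (𝓝 m) := hseq sq hsqC
  -- fundamental identity
  have hiden : ∀ (n : ℕ) (w : ℝ), Real.sqrt n * (Sn n w - 1/2)
      = Real.sqrt n * ((Sn n w - S w) - (Sn n m - 1/2))
        + Real.sqrt n * (Sn n m - 1/2) + ψ w * (Real.sqrt n * (w - m)) := by
    intro n w
    linear_combination Real.sqrt n * (hψ_eq w)
  -- membership gives scaled bound
  have hkey : ∀ n : ℕ, 1 ≤ n → ∀ w ∈ C n, |Real.sqrt n * (Sn n w - 1/2)| ≤ z * σn n w := by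
    intro n hn w hw
    have hn1' : (1:ℝ) ≤ (n:ℝ) := by exact_mod_cast hn
    have hsq : (0:ℝ) < Real.sqrt n := Real.sqrt_pos.2 (by linarith)
    rw [hC n] at hw
    obtain ⟨hwI, hwle⟩ := hw
    rw [abs_mul, abs_of_nonneg (Real.sqrt_nonneg _)]
    calc Real.sqrt n * |Sn n w - 1/2| ≤ Real.sqrt n * (z * σn n w / Real.sqrt n) :=
          mul_le_mul_of_nonneg_left hwle (Real.sqrt_nonneg _)
      _ = z * σn n w := by field_simp
  -- upper bound data
  have hEt := hequi tq htm
  have hEs := hequi sq hsm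
  have hψt : Tendsto (fun n => ψ (tq n)) atTop (𝓝 (-f)) := tψ.comp htm
  have hψs : Tendsto (fun n => ψ (sq n)) atTop (𝓝 (-f)) := tψ.comp hsm
  have hnψt : Tendsto (fun n => -ψ (tq n)) atTop (𝓝 f) := by simpa using hψt.neg
  have hnψs : Tendsto (fun n => -ψ (sq n)) atTop (𝓝 f) := by simpa using hψs.neg
  have hσt := hσconv tq htm
  have hσs := hσconv sq hsm
  have hW_le : ∀ᶠ n : ℕ in atTop, Real.sqrt n * (U n - L n) ≤
      (z * σn n (tq n) + |Real.sqrt n * ((Sn n (tq n) - S (tq n)) - (Sn n m - 1/2))|) / (-ψ (tq n))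
      + (z * σn n (sq n) + |Real.sqrt n * ((Sn n (sq n) - S (sq n)) - (Sn n m - 1/2))|) / (-ψ (sq n))
      + Real.sqrt n * (Sn n m - 1/2) * (1/(-ψ (tq n)) - 1/(-ψ (sq n)))
      + 2 * Real.sqrt n / ((n:ℝ)+1) := by
    filter_upwards [eventually_ge_atTop 1, hnψt.eventually_const_lt hf,
      hnψs.eventually_const_lt hf] with n hn hψtp hψsp
    have hn1' : (1:ℝ) ≤ (n:ℝ) := by exact_mod_cast hn
    have hsqpos : (0:ℝ) < Real.sqrt n := Real.sqrt_pos.2 (by linarith)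
    have hkt := hkey n hn (tq n) (htqC n)
    have hks := hkey n hn (sq n) (hsqC n)
    have hidt := hiden n (tq n)
    have hids := hiden n (sq n)
    have hXt : Real.sqrt n * (tq n - m) ≤
        (z * σn n (tq n) + |Real.sqrt n * ((Sn n (tq n) - S (tq n)) - (Sn n m - 1/2))|
          + Real.sqrt n * (Sn n m - 1/2)) / (-ψ (tq n)) := by
      rw [le_div_iff₀ hψtp]
      have ha1 := (abs_le.1 hkt).1
      have ha2 := le_abs_self (Real.sqrt n * ((Sn n (tq n) - S (tq n)) - (Sn n m - 1/2)))
      have hXP : Real.sqrt n * (tq n - m) * -ψ (tq n)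
          = -(ψ (tq n) * (Real.sqrt n * (tq n - m))) := by ring
      linarith [hidt]
    have hXs : (-(z * σn n (sq n)) - |Real.sqrt n * ((Sn n (sq n) - S (sq n)) - (Sn n m - 1/2))|
          + Real.sqrt n * (Sn n m - 1/2)) / (-ψ (sq n)) ≤ Real.sqrt n * (sq n - m) := by
      rw [div_le_iff₀ hψsp]
      have ha1 := (abs_le.1 hks).2
      have ha2 := neg_abs_le (Real.sqrt n * ((Sn n (sq n) - S (sq n)) - (Sn n m - 1/2)))
      have hXP : Real.sqrt n * (sq n - m) * -ψ (sq n)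
          = -(ψ (sq n) * (Real.sqrt n * (sq n - m))) := by ring
      linarith [hids]
    have hU1 : U n ≤ tq n + 1/((n:ℝ)+1) := by
      rw [hU n]; linarith [htqgt n]
    have hL1 : sq n - 1/((n:ℝ)+1) ≤ L n := by
      rw [hL n]; linarith [hsqlt n]
    have hUL : Real.sqrt n * (U n - L n) ≤
        Real.sqrt n * (tq n - m) - Real.sqrt n * (sq n - m) + 2 * Real.sqrt n / ((n:ℝ)+1) := by
      have h21 : 2/((n:ℝ)+1) = 1/((n:ℝ)+1) + 1/((n:ℝ)+1) := by ring
      have hd : U n - L n ≤ (tq n - m) - (sq n - m) + 2/((n:ℝ)+1) := by linarith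
      have h2 := mul_le_mul_of_nonneg_left hd (Real.sqrt_nonneg (n:ℝ))
      calc Real.sqrt n * (U n - L n)
          ≤ Real.sqrt n * ((tq n - m) - (sq n - m) + 2/((n:ℝ)+1)) := h2
        _ = Real.sqrt n * (tq n - m) - Real.sqrt n * (sq n - m)
            + 2 * Real.sqrt n / ((n:ℝ)+1) := by ring
    have hcomb : (z * σn n (tq n) + |Real.sqrt n * ((Sn n (tq n) - S (tq n)) - (Sn n m - 1/2))|
          + Real.sqrt n * (Sn n m - 1/2)) / (-ψ (tq n))
        - ((-(z * σn n (sq n)) - |Real.sqrt n * ((Sn n (sq n) - S (sq n)) - (Sn n m - 1/2))|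
          + Real.sqrt n * (Sn n m - 1/2)) / (-ψ (sq n)))
        = (z * σn n (tq n) + |Real.sqrt n * ((Sn n (tq n) - S (tq n)) - (Sn n m - 1/2))|) / (-ψ (tq n))
          + (z * σn n (sq n) + |Real.sqrt n * ((Sn n (sq n) - S (sq n)) - (Sn n m - 1/2))|) / (-ψ (sq n))
          + Real.sqrt n * (Sn n m - 1/2) * (1/(-ψ (tq n)) - 1/(-ψ (sq n))) := by
      have e1 : ψ (tq n) ≠ 0 := (neg_pos.1 hψtp).ne
      have e2 : ψ (sq n) ≠ 0 := (neg_pos.1 hψsp).ne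
      field_simp
      ring
    linarith [hXt, hXs, hUL, hcomb]
  -- limit of the upper bound
  have hT0 : Tendsto (fun n : ℕ => 2 * Real.sqrt n / ((n:ℝ)+1)) atTop (𝓝 0) := by
    apply squeeze_zero_norm' (a := fun n : ℕ => 2 / Real.sqrt n)
      (h' := tendsto_const_nhds.div_atTop wald_aux_sqrt_nat)
    filter_upwards [eventually_ge_atTop 1] with n hn
    have hn1' : (1:ℝ) ≤ (n:ℝ) := by exact_mod_cast hn
    have hsqpos : (0:ℝ) < Real.sqrt n := Real.sqrt_pos.2 (by linarith)
    have hnn : (0:ℝ) < (n:ℝ)+1 := by linarith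
    rw [Real.norm_eq_abs, abs_of_nonneg (by positivity)]
    rw [div_le_div_iff₀ hnn hsqpos]
    have hss : Real.sqrt n * Real.sqrt n = (n:ℝ) := Real.mul_self_sqrt (by linarith)
    nlinarith [hss]
  have hB0 : Tendsto (fun n : ℕ => Real.sqrt n * (Sn n m - 1/2)
      * (1/(-ψ (tq n)) - 1/(-ψ (sq n)))) atTop (𝓝 0) := by
    apply wald_aux_bdd_mul_null (K := M) hM
    have h1 : Tendsto (fun n => 1/(-ψ (tq n))) atTop (𝓝 (1/f)) :=
      tendsto_const_nhds.div hnψt hf.ne'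
    have h2 : Tendsto (fun n => 1/(-ψ (sq n))) atTop (𝓝 (1/f)) :=
      tendsto_const_nhds.div hnψs hf.ne'
    simpa using h1.sub h2
  have hAt : Tendsto (fun n : ℕ => (z * σn n (tq n)
      + |Real.sqrt n * ((Sn n (tq n) - S (tq n)) - (Sn n m - 1/2))|) / (-ψ (tq n)))
      atTop (𝓝 (z*σ/f)) := by
    have h1 : Tendsto (fun n : ℕ => z * σn n (tq n)
        + |Real.sqrt n * ((Sn n (tq n) - S (tq n)) - (Sn n m - 1/2))|)
        atTop (𝓝 (z*σ + |0|)) := (hσt.const_mul z).add hEt.abs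
    rw [abs_zero, add_zero] at h1
    exact h1.div hnψt hf.ne'
  have hAs : Tendsto (fun n : ℕ => (z * σn n (sq n)
      + |Real.sqrt n * ((Sn n (sq n) - S (sq n)) - (Sn n m - 1/2))|) / (-ψ (sq n)))
      atTop (𝓝 (z*σ/f)) := by
    have h1 : Tendsto (fun n : ℕ => z * σn n (sq n)
        + |Real.sqrt n * ((Sn n (sq n) - S (sq n)) - (Sn n m - 1/2))|)
        atTop (𝓝 (z*σ + |0|)) := (hσs.const_mul z).add hEs.abs
    rw [abs_zero, add_zero] at h1
    exact h1.div hnψs hf.ne'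
  have hRlim : Tendsto (fun n : ℕ =>
      (z * σn n (tq n) + |Real.sqrt n * ((Sn n (tq n) - S (tq n)) - (Sn n m - 1/2))|) / (-ψ (tq n))
      + (z * σn n (sq n) + |Real.sqrt n * ((Sn n (sq n) - S (sq n)) - (Sn n m - 1/2))|) / (-ψ (sq n))
      + Real.sqrt n * (Sn n m - 1/2) * (1/(-ψ (tq n)) - 1/(-ψ (sq n)))
      + 2 * Real.sqrt n / ((n:ℝ)+1)) atTop (𝓝 (2*z*σ/f)) := by
    have h := ((hAt.add hAs).add hB0).add hT0
    rw [show 2*z*σ/f = z*σ/f + z*σ/f + 0 + 0 by ring]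
    exact h
  -- lower barrier
  have hLow : ∀ η : ℝ, 0 < η → η < z*σ →
      ∀ᶠ n : ℕ in atTop, 2*(z*σ - η)/f ≤ Real.sqrt n * (U n - L n) := by
    intro η hη hηz
    set u : ℕ → ℝ := fun n =>
      m + (Real.sqrt n * (Sn n m - 1/2) + (z*σ - η)) / (f * Real.sqrt n) with hudef
    set l : ℕ → ℝ := fun n =>
      m + (Real.sqrt n * (Sn n m - 1/2) - (z*σ - η)) / (f * Real.sqrt n) with hldef
    have hKb : (0:ℝ) ≤ M + (z*σ - η) := by linarith
    have hcub : ∀ n : ℕ, |Real.sqrt n * (Sn n m - 1/2) + (z*σ - η)| ≤ M + (z*σ - η) := by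
      intro n
      calc |Real.sqrt n * (Sn n m - 1/2) + (z*σ - η)|
          ≤ |Real.sqrt n * (Sn n m - 1/2)| + |z*σ - η| := abs_add_le _ _
        _ ≤ M + (z*σ - η) := by
            rw [abs_of_pos (by linarith : (0:ℝ) < z*σ - η)]
            exact add_le_add (hM n) le_rfl
    have hclb : ∀ n : ℕ, |Real.sqrt n * (Sn n m - 1/2) - (z*σ - η)| ≤ M + (z*σ - η) := by
      intro n
      calc |Real.sqrt n * (Sn n m - 1/2) - (z*σ - η)|
          ≤ |Real.sqrt n * (Sn n m - 1/2)| + |z*σ - η| := abs_sub _ _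
        _ ≤ M + (z*σ - η) := by
            rw [abs_of_pos (by linarith : (0:ℝ) < z*σ - η)]
            exact add_le_add (hM n) le_rfl
    have hdenlim : Tendsto (fun n : ℕ => (M + (z*σ-η)) / (f * Real.sqrt n)) atTop (𝓝 0) :=
      tendsto_const_nhds.div_atTop (wald_aux_sqrt_nat.const_mul_atTop hf)
    have hu_t : Tendsto u atTop (𝓝 m) := by
      rw [show (𝓝 m) = 𝓝 (m + 0) by rw [add_zero]]
      apply tendsto_const_nhds.add
      apply squeeze_zero_norm (a := fun n : ℕ => (M + (z*σ-η)) / (f * Real.sqrt n))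
        (fun n => ?_) hdenlim
      rw [Real.norm_eq_abs, abs_div, abs_of_nonneg (by positivity : (0:ℝ) ≤ f * Real.sqrt n)]
      exact div_le_div_of_nonneg_right (hcub n) (by positivity)
    have hl_t : Tendsto l atTop (𝓝 m) := by
      rw [show (𝓝 m) = 𝓝 (m + 0) by rw [add_zero]]
      apply tendsto_const_nhds.add
      apply squeeze_zero_norm (a := fun n : ℕ => (M + (z*σ-η)) / (f * Real.sqrt n))
        (fun n => ?_) hdenlim
      rw [Real.norm_eq_abs, abs_div, abs_of_nonneg (by positivity : (0:ℝ) ≤ f * Real.sqrt n)]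
      exact div_le_div_of_nonneg_right (hclb n) (by positivity)
    have hEu := hequi u hu_t
    have hEl := hequi l hl_t
    have hψu : Tendsto (fun n => ψ (u n)) atTop (𝓝 (-f)) := tψ.comp hu_t
    have hψl : Tendsto (fun n => ψ (l n)) atTop (𝓝 (-f)) := tψ.comp hl_t
    have hσu := hσconv u hu_t
    have hσl := hσconv l hl_t
    have hψu0 : Tendsto (fun n => ψ (u n) + f) atTop (𝓝 0) := by
      simpa using hψu.add (tendsto_const_nhds : Tendsto (fun _ : ℕ => f) atTop (𝓝 f))
    have hψl0 : Tendsto (fun n => ψ (l n) + f) atTop (𝓝 0) := by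
      simpa using hψl.add (tendsto_const_nhds : Tendsto (fun _ : ℕ => f) atTop (𝓝 f))
    have hGu : Tendsto (fun n : ℕ => Real.sqrt n * (Sn n (u n) - 1/2)) atTop
        (𝓝 (-(z*σ - η))) := by
      have hquot : ∀ n : ℕ, |(Real.sqrt n * (Sn n m - 1/2) + (z*σ - η)) / f|
          ≤ (M + (z*σ-η))/f := by
        intro n
        rw [abs_div, abs_of_pos hf]
        exact div_le_div_of_nonneg_right (hcub n) hf.le
      have h0 : Tendsto (fun n : ℕ =>
          Real.sqrt n * ((Sn n (u n) - S (u n)) - (Sn n m - 1/2))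
          + ((Real.sqrt n * (Sn n m - 1/2) + (z*σ - η)) / f) * (ψ (u n) + f)
          - (z*σ - η)) atTop (𝓝 (0 + 0 - (z*σ-η))) :=
        (hEu.add (wald_aux_bdd_mul_null hquot hψu0)).sub tendsto_const_nhds
      rw [show -(z*σ - η) = 0 + 0 - (z*σ - η) by ring]
      apply h0.congr'
      filter_upwards [eventually_ge_atTop 1] with n hn
      have hn1' : (1:ℝ) ≤ (n:ℝ) := by exact_mod_cast hn
      have hsqpos : (0:ℝ) < Real.sqrt n := Real.sqrt_pos.2 (by linarith)
      have hXu : Real.sqrt n * (u n - m)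
          = (Real.sqrt n * (Sn n m - 1/2) + (z*σ - η)) / f := by
        have hun : u n = m + (Real.sqrt n * (Sn n m - 1/2) + (z*σ - η)) / (f * Real.sqrt n) := rfl
        rw [hun]
        have e1 : Real.sqrt (n:ℝ) ≠ 0 := hsqpos.ne'
        have e2 : f ≠ 0 := hf.ne'
        field_simp
        ring
      rw [hiden n (u n), hXu]
      field_simp
      ring
    have hGl : Tendsto (fun n : ℕ => Real.sqrt n * (Sn n (l n) - 1/2)) atTop
        (𝓝 (z*σ - η)) := by
      have hquot : ∀ n : ℕ, |(Real.sqrt n * (Sn n m - 1/2) - (z*σ - η)) / f|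
          ≤ (M + (z*σ-η))/f := by
        intro n
        rw [abs_div, abs_of_pos hf]
        exact div_le_div_of_nonneg_right (hclb n) hf.le
      have h0 : Tendsto (fun n : ℕ =>
          Real.sqrt n * ((Sn n (l n) - S (l n)) - (Sn n m - 1/2))
          + ((Real.sqrt n * (Sn n m - 1/2) - (z*σ - η)) / f) * (ψ (l n) + f)
          + (z*σ - η)) atTop (𝓝 (0 + 0 + (z*σ-η))) :=
        (hEl.add (wald_aux_bdd_mul_null hquot hψl0)).add tendsto_const_nhds
      rw [show (z*σ - η) = 0 + 0 + (z*σ - η) by ring]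
      apply h0.congr'
      filter_upwards [eventually_ge_atTop 1] with n hn
      have hn1' : (1:ℝ) ≤ (n:ℝ) := by exact_mod_cast hn
      have hsqpos : (0:ℝ) < Real.sqrt n := Real.sqrt_pos.2 (by linarith)
      have hXl : Real.sqrt n * (l n - m)
          = (Real.sqrt n * (Sn n m - 1/2) - (z*σ - η)) / f := by
        have hln : l n = m + (Real.sqrt n * (Sn n m - 1/2) - (z*σ - η)) / (f * Real.sqrt n) := rfl
        rw [hln]
        have e1 : Real.sqrt (n:ℝ) ≠ 0 := hsqpos.ne'
        have e2 : f ≠ 0 := hf.ne'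
        field_simp
        ring
      rw [hiden n (l n), hXl]
      field_simp
      ring
    have hb1 : ∀ᶠ n : ℕ in atTop,
        |Real.sqrt n * (Sn n (u n) - 1/2) + (z*σ - η)| < η/2 := by
      have h := Metric.tendsto_nhds.1 hGu (η/2) (by linarith)
      filter_upwards [h] with n hn
      rw [Real.dist_eq, sub_neg_eq_add] at hn
      exact hn
    have hb4 : ∀ᶠ n : ℕ in atTop,
        |Real.sqrt n * (Sn n (l n) - 1/2) - (z*σ - η)| < η/2 := by
      have h := Metric.tendsto_nhds.1 hGl (η/2) (by linarith)
      filter_upwards [h] with n hn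
      rw [Real.dist_eq] at hn
      exact hn
    have hb2 : ∀ᶠ n : ℕ in atTop, z*σ - η/2 < z * σn n (u n) :=
      (hσu.const_mul z).eventually_const_lt (by linarith)
    have hb5 : ∀ᶠ n : ℕ in atTop, z*σ - η/2 < z * σn n (l n) :=
      (hσl.const_mul z).eventually_const_lt (by linarith)
    have hb3 : ∀ᶠ n : ℕ in atTop, u n ∈ Set.Icc a b :=
      hu_t.eventually (Icc_mem_nhds hab hmb)
    have hb6 : ∀ᶠ n : ℕ in atTop, l n ∈ Set.Icc a b :=
      hl_t.eventually (Icc_mem_nhds hab hmb)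
    filter_upwards [hb1, hb2, hb3, hb4, hb5, hb6, eventually_ge_atTop 1]
      with n h1 h2 h3 h4 h5 h6 hn
    have hn1' : (1:ℝ) ≤ (n:ℝ) := by exact_mod_cast hn
    have hsqpos : (0:ℝ) < Real.sqrt n := Real.sqrt_pos.2 (by linarith)
    have habs_eq : ∀ x : ℝ, |x - 1/2| * Real.sqrt n = |Real.sqrt n * (x - 1/2)| := by
      intro x
      rw [abs_mul, abs_of_nonneg (Real.sqrt_nonneg _)]
      ring
    have huC : u n ∈ C n := by
      rw [hC n]
      refine ⟨h3, ?_⟩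
      rw [le_div_iff₀ hsqpos, habs_eq, abs_le]
      rw [abs_lt] at h1
      constructor <;> linarith [h1.1, h1.2, h2]
    have hlC : l n ∈ C n := by
      rw [hC n]
      refine ⟨h6, ?_⟩
      rw [le_div_iff₀ hsqpos, habs_eq, abs_le]
      rw [abs_lt] at h4
      constructor <;> linarith [h4.1, h4.2, h5]
    have hUu : u n ≤ U n := by
      rw [hU n]; exact le_csSup (hbA n) huC
    have hLl : L n ≤ l n := by
      rw [hL n]; exact csInf_le (hbB n) hlC
    have hul : Real.sqrt n * (u n - l n) = 2*(z*σ - η)/f := by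
      have hun : u n = m + (Real.sqrt n * (Sn n m - 1/2) + (z*σ - η)) / (f * Real.sqrt n) := rfl
      have hln : l n = m + (Real.sqrt n * (Sn n m - 1/2) - (z*σ - η)) / (f * Real.sqrt n) := rfl
      rw [hun, hln]
      have e1 : Real.sqrt (n:ℝ) ≠ 0 := hsqpos.ne'
      have e2 : f ≠ 0 := hf.ne'
      field_simp
      ring
    calc 2*(z*σ-η)/f = Real.sqrt n * (u n - l n) := hul.symm
      _ ≤ Real.sqrt n * (U n - L n) :=
          mul_le_mul_of_nonneg_left (by linarith) (Real.sqrt_nonneg _)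
  -- final assembly
  have T1 : Tendsto (fun n : ℕ => Real.sqrt n * (U n - L n)) atTop (𝓝 (2*z*σ/f)) := by
    rw [Metric.tendsto_nhds]
    intro ε hε
    have hη1 : 0 < min (z*σ/2) (f*ε/8) := lt_min (by positivity) (by positivity)
    have hη2 : min (z*σ/2) (f*ε/8) < z*σ :=
      lt_of_le_of_lt (min_le_left _ _) (half_lt_self (mul_pos hz hσ))
    have hlow := hLow _ hη1 hη2
    have hup2 := hRlim.eventually_lt_const (show 2*z*σ/f < 2*z*σ/f + ε/2 by linarith)
    filter_upwards [hlow, hW_le, hup2] with n h1 h2 h3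
    rw [Real.dist_eq, abs_sub_lt_iff]
    constructor
    · linarith
    · have hηle : min (z*σ/2) (f*ε/8) ≤ f*ε/8 := min_le_right _ _
      have hkey2 : 2*z*σ/f - ε/2 ≤ 2*(z*σ - min (z*σ/2) (f*ε/8))/f := by
        rw [le_div_iff₀ hf]
        have e0 : f ≠ 0 := hf.ne'
        have e : (2*z*σ/f - ε/2)*f = 2*z*σ - ε*f/2 := by field_simp
        have hfε : 0 ≤ f*ε := by positivity
        have hfε2 : ε*f = f*ε := by ring
        linarith [hηle]
      linarith
  refine ⟨T1, ?_⟩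
  have T2 := T1.div_const (2*z)
  have heq : 2*z*σ/f/(2*z) = σ/f := by
    field_simp
  rw [heq] at T2
  exact T2
end

section
/- Under the stated assumptions, the upper confidence limit admits the asymptotic representation √n·(U_n − m) − (√n·(S_n(m) − 1/2) + z·σ)/f → 0 as n → ∞. (This is the intermediate expansion of the upper Brookmeyer–Crowley limit used in the proof of Proposition 1; the empirical-process term √n·(S_n(m) − 1/2) appearing here cancels against the corresponding term in the lower limit.) -/
set_option maxHeartbeats 1000000


open Filter Topology

theorem upper_limit_expansion
    (a m b f σ z : ℝ) (hab : a < m) (hmb : m < b)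
    (hf : 0 < f) (hσ : 0 < σ) (hz : 0 < z)
    (S : ℝ → ℝ)
    (hScont : ContinuousOn S (Set.Icc a b))
    (hSanti : StrictAntiOn S (Set.Icc a b))
    (hSm : S m = 1/2)
    (hSderiv : HasDerivAt S (-f) m)
    (Sn σn : ℕ → ℝ → ℝ)
    (hunif : TendstoUniformlyOn Sn S atTop (Set.Icc a b))
    (hequi : ∀ t : ℕ → ℝ, Tendsto t atTop (𝓝 m) →
      Tendsto (fun n : ℕ => Real.sqrt n * ((Sn n (t n) - S (t n)) - (Sn n m - 1/2)))
        atTop (𝓝 0))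
    (hbdd : ∃ M : ℝ, ∀ n : ℕ, |Real.sqrt n * (Sn n m - 1/2)| ≤ M)
    (hσconv : ∀ t : ℕ → ℝ, Tendsto t atTop (𝓝 m) →
      Tendsto (fun n => σn n (t n)) atTop (𝓝 σ))
    (hσbdd : ∃ B : ℝ, ∀ n, ∀ t ∈ Set.Icc a b, 0 ≤ σn n t ∧ σn n t ≤ B)
    (hSmono : ∀ n, AntitoneOn (Sn n) (Set.Icc a b))
    (C : ℕ → Set ℝ)
    (hC : ∀ n, C n = {t | t ∈ Set.Icc a b ∧ |Sn n t - 1/2| ≤ z * σn n t / Real.sqrt n})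
    (hCne : ∀ n, (C n).Nonempty)
    (L U : ℕ → ℝ)
    (hL : ∀ n, L n = sInf (C n))
    (hU : ∀ n, U n = sSup (C n)) :
    Tendsto
      (fun n : ℕ => Real.sqrt n * (U n - m) - (Real.sqrt n * (Sn n m - 1/2) + z * σ) / f)
      atTop (𝓝 0) := by
  obtain ⟨M, hM⟩ := hbdd
  obtain ⟨B, hB⟩ := hσbdd
  have hM0 : 0 ≤ M := le_trans (abs_nonneg _) (hM 0)
  have hmab : m ∈ Set.Icc a b := ⟨hab.le, hmb.le⟩
  have hB0 : 0 ≤ B := le_trans (hB 0 m hmab).1 (hB 0 m hmab).2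
  -- basic facts about C n
  have hCsub : ∀ n, C n ⊆ Set.Icc a b := by
    intro n x hx; rw [hC n] at hx; exact hx.1
  have hCbdd : ∀ n, BddAbove (C n) := fun n => ⟨b, fun x hx => ((hCsub n) hx).2⟩
  -- sqrt facts
  have hsqrt_atTop : Tendsto (fun n : ℕ => Real.sqrt n) atTop atTop := by
    have h := (tendsto_rpow_atTop (by norm_num : (0:ℝ) < 1/2)).comp
      (tendsto_natCast_atTop_atTop (R := ℝ))
    refine h.congr fun n => ?_
    simp only [Function.comp]
    exact (Real.sqrt_eq_rpow (n : ℝ)).symm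
  have hinv_sqrt : Tendsto (fun n : ℕ => 1 / Real.sqrt n) atTop (𝓝 0) := by
    exact hsqrt_atTop.inv_tendsto_atTop.congr (fun n => (one_div _).symm)
  -- membership in the sqrt-n scale
  have hmem : ∀ n, ∀ x ∈ C n, |Real.sqrt n * (Sn n x - 1/2)| ≤ z * σn n x := by
    intro n x hx
    rw [hC n] at hx
    obtain ⟨hx1, hx2⟩ := hx
    have hσ0 : 0 ≤ σn n x := (hB n x hx1).1
    rcases eq_or_lt_of_le (Real.sqrt_nonneg (n : ℝ)) with h0 | h0
    · rw [abs_mul, ← h0]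
      simpa using mul_nonneg hz.le hσ0
    · rw [abs_mul, abs_of_pos h0]
      calc Real.sqrt n * |Sn n x - 1/2| ≤ Real.sqrt n * (z * σn n x / Real.sqrt n) :=
            mul_le_mul_of_nonneg_left hx2 h0.le
        _ = z * σn n x := by field_simp
  -- consistency: points of C n concentrate near m
  have hCnear : ∀ ε > (0:ℝ), ∀ᶠ n : ℕ in atTop, ∀ x ∈ C n, |x - m| < ε := by
    intro ε hε
    set ε' := min ε (min ((m - a)/2) ((b - m)/2)) with hε'def
    have hε'pos : 0 < ε' := by
      apply lt_min hε
      apply lt_min <;> linarith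
    have hε'ε : ε' ≤ ε := min_le_left _ _
    have hε'a : ε' ≤ (m - a)/2 := le_trans (min_le_right _ _) (min_le_left _ _)
    have hε'b : ε' ≤ (b - m)/2 := le_trans (min_le_right _ _) (min_le_right _ _)
    have h1 : m - ε' ∈ Set.Icc a b := ⟨by linarith, by linarith⟩
    have h2 : m + ε' ∈ Set.Icc a b := ⟨by linarith, by linarith⟩
    have hS1 : 1/2 < S (m - ε') := by
      have := hSanti h1 hmab (by linarith)
      rwa [hSm] at this
    have hS2 : S (m + ε') < 1/2 := by
      have := hSanti hmab h2 (by linarith)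
      rwa [hSm] at this
    set η := min (S (m - ε') - 1/2) (1/2 - S (m + ε')) with hηdef
    have hη : 0 < η := lt_min (by linarith) (by linarith)
    have hu := (Metric.tendstoUniformlyOn_iff.mp hunif) (η/2) (by positivity)
    have hz2 : ∀ᶠ n : ℕ in atTop, z * B * (1 / Real.sqrt n) < η/2 := by
      have := hinv_sqrt.const_mul (z * B)
      rw [mul_zero] at this
      exact (this.eventually (eventually_lt_nhds (show (0:ℝ) < η/2 by positivity)))
    filter_upwards [hu, hz2, eventually_ge_atTop 1] with n hn1 hn2 hn3 x hx
    rw [hC n] at hx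
    obtain ⟨hx1, hx2⟩ := hx
    have hsn : 0 < Real.sqrt n := Real.sqrt_pos.mpr (by exact_mod_cast hn3)
    have h3 : |Sn n x - 1/2| < η/2 := by
      have hσB : z * σn n x ≤ z * B := mul_le_mul_of_nonneg_left (hB n x hx1).2 hz.le
      have : z * σn n x / Real.sqrt n ≤ z * B * (1 / Real.sqrt n) := by
        rw [mul_one_div]
        gcongr
      linarith [hx2]
    have h4 : |S x - 1/2| < η := by
      have h5 : dist (S x) (Sn n x) < η/2 := hn1 x hx1
      rw [Real.dist_eq] at h5
      calc |S x - 1/2| = |(S x - Sn n x) + (Sn n x - 1/2)| := by ring_nf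
        _ ≤ |S x - Sn n x| + |Sn n x - 1/2| := abs_add_le _ _
        _ < η/2 + η/2 := by exact add_lt_add h5 h3
        _ = η := by ring
    by_contra hcon
    push_neg at hcon
    rcases abs_cases (x - m) with ⟨he, _⟩ | ⟨he, _⟩
    · -- x ≥ m, and x - m ≥ ε ≥ ε'
      have hxge : m + ε' ≤ x := by linarith
      have := hSanti.antitoneOn h2 hx1 hxge
      have hη2 : η ≤ 1/2 - S (m + ε') := min_le_right _ _
      have : S x - 1/2 ≤ -η := by linarith
      have := neg_abs_le (S x - 1/2)
      linarith [abs_lt.mp h4]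
    · have hxle : x ≤ m - ε' := by linarith
      have := hSanti.antitoneOn hx1 h1 hxle
      have hη1 : η ≤ S (m - ε') - 1/2 := min_le_left _ _
      have : η ≤ S x - 1/2 := by linarith
      linarith [abs_lt.mp h4]
  -- derivative linearization along sequences tending to m
  have hlitO := hasDerivAt_iff_isLittleO.mp hSderiv
  have hkey : ∀ v : ℕ → ℝ, Tendsto v atTop (𝓝 m) → ∀ c > (0:ℝ), ∀ᶠ n : ℕ in atTop,
      |Real.sqrt n * (S (v n) - S m) + f * (Real.sqrt n * (v n - m))| ≤
        c * |Real.sqrt n * (v n - m)| := by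
    intro v hv c hc
    have h1 := hlitO.def hc
    have h2 := hv.eventually h1
    filter_upwards [h2] with n hn
    have hn' : |S (v n) - S m + f * (v n - m)| ≤ c * |v n - m| := by
      have heq : S (v n) - S m + f * (v n - m) = S (v n) - S m - (v n - m) • (-f) := by
        simp [smul_eq_mul]; ring
      rw [heq]
      simpa [Real.norm_eq_abs] using hn
    have heq2 : Real.sqrt n * (S (v n) - S m) + f * (Real.sqrt n * (v n - m)) =
        Real.sqrt n * (S (v n) - S m + f * (v n - m)) := by ring
    rw [heq2, abs_mul, abs_mul, abs_of_nonneg (Real.sqrt_nonneg _)]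
    calc Real.sqrt n * |S (v n) - S m + f * (v n - m)| ≤ Real.sqrt n * (c * |v n - m|) :=
          mul_le_mul_of_nonneg_left hn' (Real.sqrt_nonneg _)
      _ = c * (Real.sqrt n * |v n - m|) := by ring
  -- the decomposition identity
  have hdecomp : ∀ n : ℕ, ∀ x : ℝ, Real.sqrt n * (Sn n x - 1/2) =
      Real.sqrt n * ((Sn n x - S x) - (Sn n m - 1/2)) + Real.sqrt n * (Sn n m - 1/2)
        + Real.sqrt n * (S x - S m) := by
    intro n x
    rw [hSm]; ring
  -- choose near-sup points t n ∈ C n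
  have hchoice : ∀ n : ℕ, ∃ x ∈ C n, U n - 1/((n:ℝ)+1) < x := by
    intro n
    apply exists_lt_of_lt_csSup (hCne n)
    rw [← hU n]
    have : (0:ℝ) < 1/((n:ℝ)+1) := by positivity
    linarith
  choose t ht htlt using hchoice
  have htU : ∀ n, t n ≤ U n := fun n => (hU n) ▸ le_csSup (hCbdd n) (ht n)
  have htab : ∀ n, t n ∈ Set.Icc a b := fun n => hCsub n (ht n)
  have htend : Tendsto t atTop (𝓝 m) := by
    rw [Metric.tendsto_nhds]
    intro ε hε
    filter_upwards [hCnear ε hε] with n hn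
    rw [Real.dist_eq]
    exact hn (t n) (ht n)
  have hEten := hequi t htend
  have hσten := hσconv t htend
  -- boundedness of X n := √n (t n - m)
  set K := 2*(1 + M + z*B)/f with hKdef
  have hK0 : 0 ≤ K := by positivity
  have hXbd : ∀ᶠ n : ℕ in atTop, |Real.sqrt n * (t n - m)| ≤ K := by
    have hE1 : ∀ᶠ n : ℕ in atTop,
        |Real.sqrt n * ((Sn n (t n) - S (t n)) - (Sn n m - 1/2))| ≤ 1 := by
      filter_upwards [Metric.tendsto_nhds.mp hEten 1 one_pos] with n hn
      rw [Real.dist_eq, sub_zero] at hn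
      exact hn.le
    filter_upwards [hkey t htend (f/2) (by positivity), hE1] with n hGfX hE
    set X := Real.sqrt n * (t n - m)
    set E := Real.sqrt n * ((Sn n (t n) - S (t n)) - (Sn n m - 1/2))
    set G := Real.sqrt n * (S (t n) - S m)
    set W := Real.sqrt n * (Sn n m - 1/2)
    have hA : |E + W + G| ≤ z * B := by
      have h1 := hmem n (t n) (ht n)
      rw [hdecomp n (t n)] at h1
      exact h1.trans (mul_le_mul_of_nonneg_left (hB n (t n) (htab n)).2 hz.le)
    have hGb : |G| ≤ 1 + M + z * B := by
      have h1 : G = (E + W + G) + -E + -W := by ring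
      calc |G| = |(E + W + G) + -E + -W| := by rw [← h1]
        _ ≤ |(E + W + G) + -E| + |-W| := abs_add_le _ _
        _ ≤ |E + W + G| + |-E| + |-W| := by linarith [abs_add_le (E + W + G) (-E)]
        _ = |E + W + G| + |E| + |W| := by rw [abs_neg, abs_neg]
        _ ≤ z * B + 1 + M := add_le_add (add_le_add hA hE) (hM n)
        _ = 1 + M + z * B := by ring
    have hfX : f * |X| ≤ (f/2) * |X| + (1 + M + z * B) := by
      have h1 : |f * X| ≤ |G + f * X| + |-G| := by
        calc |f * X| = |(G + f * X) + -G| := by ring_nf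
          _ ≤ |G + f * X| + |-G| := abs_add_le _ _
      rw [abs_mul, abs_of_pos hf, abs_neg] at h1
      linarith [hGfX]
    rw [hKdef, le_div_iff₀ hf]
    nlinarith [hfX]
  -- main argument
  rw [Metric.tendsto_nhds]
  intro ε hε
  -- upper bound
  have hup : ∀ᶠ n : ℕ in atTop,
      Real.sqrt n * (U n - m) - (Real.sqrt n * (Sn n m - 1/2) + z * σ) / f < ε := by
    set c := f * ε / (8 * (K + 1)) with hcdef
    have hc : 0 < c := by positivity
    have hE2 : ∀ᶠ n : ℕ in atTop,
        |Real.sqrt n * ((Sn n (t n) - S (t n)) - (Sn n m - 1/2))| < f * ε / 8 := by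
      filter_upwards [Metric.tendsto_nhds.mp hEten (f*ε/8) (by positivity)] with n hn
      rwa [Real.dist_eq, sub_zero] at hn
    have hσ2 : ∀ᶠ n : ℕ in atTop, z * σn n (t n) < z * σ + f * ε / 8 := by
      filter_upwards [Metric.tendsto_nhds.mp hσten (f*ε/(8*z)) (by positivity)] with n hn
      rw [Real.dist_eq] at hn
      have h1 : σn n (t n) < σ + f*ε/(8*z) := by linarith [abs_lt.mp hn]
      calc z * σn n (t n) < z * (σ + f*ε/(8*z)) := by
            exact mul_lt_mul_of_pos_left h1 hz
        _ = z * σ + f * ε / 8 := by field_simp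
    have hsq2 : ∀ᶠ n : ℕ in atTop, Real.sqrt n * (1/((n:ℝ)+1)) < ε / 8 := by
      have hle : ∀ n : ℕ, Real.sqrt n * (1/((n:ℝ)+1)) ≤ 1 / Real.sqrt n := by
        intro n
        rcases Nat.eq_zero_or_pos n with h | h
        · subst h; simp
        · have hn0 : (0:ℝ) < n := by exact_mod_cast h
          have hs0 : 0 < Real.sqrt n := Real.sqrt_pos.mpr hn0
          rw [mul_one_div, div_le_div_iff₀ (by linarith) hs0]
          rw [Real.mul_self_sqrt hn0.le]
          linarith
      have h0 : ∀ n : ℕ, 0 ≤ Real.sqrt n * (1/((n:ℝ)+1)) := by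
        intro n; positivity
      have htend0 : Tendsto (fun n : ℕ => Real.sqrt n * (1/((n:ℝ)+1))) atTop (𝓝 0) :=
        squeeze_zero h0 hle hinv_sqrt
      exact htend0.eventually (eventually_lt_nhds (by positivity))
    filter_upwards [hkey t htend c hc, hXbd, hE2, hσ2, hsq2] with n hGfX hXK hE hσn hsq
    set X := Real.sqrt n * (t n - m)
    set E := Real.sqrt n * ((Sn n (t n) - S (t n)) - (Sn n m - 1/2))
    set G := Real.sqrt n * (S (t n) - S m)
    set W := Real.sqrt n * (Sn n m - 1/2)
    have hA : |E + W + G| ≤ z * σn n (t n) := by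
      have h1 := hmem n (t n) (ht n)
      rw [hdecomp n (t n)] at h1
      exact h1
    have hcX : |G + f * X| ≤ f * ε / 8 := by
      refine hGfX.trans ?_
      calc c * |X| ≤ c * (K + 1) := by
            apply mul_le_mul_of_nonneg_left (by linarith) hc.le
        _ = f * ε / 8 := by
            rw [hcdef]; field_simp
    -- f X ≤ W + zσ + 3fε/8
    have hfX : f * X ≤ W + z * σ + 3 * (f * ε) / 8 := by
      have h1 := abs_le.mp hA
      have h2 : G + f * X ≤ f * ε / 8 := le_of_abs_le hcX
      have h3 : E ≤ f * ε / 8 := le_of_abs_le hE.le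
      linarith [h1.1]
    have hX : X ≤ (W + z * σ) / f + 3 * ε / 8 := by
      have h4 : X ≤ (W + z * σ + 3 * (f * ε) / 8) / f := by
        rw [le_div_iff₀ hf]
        nlinarith [hfX]
      have h5 : (W + z * σ + 3 * (f * ε) / 8) / f = (W + z * σ) / f + 3 * ε / 8 := by
        field_simp
      linarith
    -- √n (U n - m) ≤ X + √n/(n+1)
    have hUle : Real.sqrt n * (U n - m) ≤ X + Real.sqrt n * (1/((n:ℝ)+1)) := by
      have h1 : U n - m ≤ (t n - m) + 1/((n:ℝ)+1) := by
        have := htlt n; linarith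
      calc Real.sqrt n * (U n - m) ≤ Real.sqrt n * ((t n - m) + 1/((n:ℝ)+1)) :=
            mul_le_mul_of_nonneg_left h1 (Real.sqrt_nonneg _)
        _ = X + Real.sqrt n * (1/((n:ℝ)+1)) := by ring
    linarith
  -- lower bound
  have hlow : ∀ᶠ n : ℕ in atTop,
      -ε < Real.sqrt n * (U n - m) - (Real.sqrt n * (Sn n m - 1/2) + z * σ) / f := by
    set δ := min (z*σ/2) (f*ε/2) with hδdef
    have hδ0 : 0 < δ := lt_min (by positivity) (by positivity)
    have hδ1 : δ ≤ z*σ/2 := min_le_left _ _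
    have hδ2 : δ ≤ f*ε/2 := min_le_right _ _
    set u : ℕ → ℝ := fun n => m + (Real.sqrt n * (Sn n m - 1/2) + z*σ - δ) / (f * Real.sqrt n)
      with hudef
    set K' := (M + z*σ + δ)/f with hK'def
    have hK'0 : 0 < K' := by positivity
    have hWbd : ∀ n : ℕ, |Real.sqrt n * (Sn n m - 1/2) + z*σ - δ| ≤ M + z*σ + δ := by
      intro n
      have h1 := abs_le.mp (hM n)
      rw [abs_le]
      constructor <;> nlinarith [hσ, hz]
    have huv : ∀ n : ℕ, 1 ≤ n → Real.sqrt n * (u n - m) =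
        (Real.sqrt n * (Sn n m - 1/2) + z*σ - δ) / f := by
      intro n hn
      have hs0 : 0 < Real.sqrt n := Real.sqrt_pos.mpr (by exact_mod_cast hn)
      rw [hudef]
      field_simp
      ring
    have hYbd : ∀ n : ℕ, 1 ≤ n → |Real.sqrt n * (u n - m)| ≤ K' := by
      intro n hn
      rw [huv n hn, abs_div, abs_of_pos hf, hK'def]
      gcongr
      exact hWbd n
    have hutend : Tendsto u atTop (𝓝 m) := by
      have hv : Tendsto (fun n : ℕ =>
          (Real.sqrt n * (Sn n m - 1/2) + z*σ - δ) / (f * Real.sqrt n)) atTop (𝓝 0) := by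
        apply squeeze_zero_norm' (a := fun n : ℕ => (M + z*σ + δ)/f * (1 / Real.sqrt n))
        · filter_upwards [eventually_ge_atTop 1] with n hn
          have hs0 : 0 < Real.sqrt n := Real.sqrt_pos.mpr (by exact_mod_cast hn)
          rw [Real.norm_eq_abs, abs_div, abs_of_pos (by positivity : 0 < f * Real.sqrt n)]
          rw [div_le_iff₀ (by positivity)]
          have := hWbd n
          calc |Real.sqrt n * (Sn n m - 1/2) + z*σ - δ| ≤ M + z*σ + δ := hWbd n
            _ = (M + z*σ + δ)/f * (1 / Real.sqrt n) * (f * Real.sqrt n) := by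
                field_simp
        · have := hinv_sqrt.const_mul ((M + z*σ + δ)/f)
          simpa using this
      have h2 := tendsto_const_nhds (x := m) (f := atTop (α := ℕ)) |>.add hv
      rw [add_zero] at h2
      exact h2
    have hEten' := hequi u hutend
    have hσten' := hσconv u hutend
    set c' := δ / (4 * (K' + 1)) with hc'def
    have hc' : 0 < c' := by positivity
    have hE3 : ∀ᶠ n : ℕ in atTop,
        |Real.sqrt n * ((Sn n (u n) - S (u n)) - (Sn n m - 1/2))| < δ/4 := by
      filter_upwards [Metric.tendsto_nhds.mp hEten' (δ/4) (by positivity)] with n hn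
      rwa [Real.dist_eq, sub_zero] at hn
    have hσ3 : ∀ᶠ n : ℕ in atTop, z * σ - δ/4 < z * σn n (u n) := by
      filter_upwards [Metric.tendsto_nhds.mp hσten' (δ/(4*z)) (by positivity)] with n hn
      rw [Real.dist_eq] at hn
      have h1 : σ - δ/(4*z) < σn n (u n) := by linarith [abs_lt.mp hn]
      have h2 : z * (σ - δ/(4*z)) < z * σn n (u n) := mul_lt_mul_of_pos_left h1 hz
      have h3 : z * (σ - δ/(4*z)) = z * σ - δ/4 := by field_simp
      linarith
    have huab : ∀ᶠ n : ℕ in atTop, u n ∈ Set.Icc a b := by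
      filter_upwards [hutend.eventually (Ioo_mem_nhds hab hmb)] with n hn
      exact Set.Ioo_subset_Icc_self hn
    filter_upwards [hkey u hutend c' hc', hE3, hσ3, huab, eventually_ge_atTop 1] with n
      hGfY hE hσn huab1 hn1
    have hs0 : 0 < Real.sqrt n := Real.sqrt_pos.mpr (by exact_mod_cast hn1)
    have hfY : f * (Real.sqrt n * (u n - m)) =
        Real.sqrt n * (Sn n m - 1/2) + z*σ - δ := by
      rw [huv n hn1]
      field_simp
    set Y := Real.sqrt n * (u n - m) with hYdef
    set E := Real.sqrt n * ((Sn n (u n) - S (u n)) - (Sn n m - 1/2))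
    set G := Real.sqrt n * (S (u n) - S m)
    set W := Real.sqrt n * (Sn n m - 1/2)
    have hcY : |G + f * Y| ≤ δ/4 := by
      refine hGfY.trans ?_
      calc c' * |Y| ≤ c' * (K' + 1) := by
            apply mul_le_mul_of_nonneg_left ((hYbd n hn1).trans (by linarith)) hc'.le
        _ = δ / 4 := by rw [hc'def]; field_simp
    -- membership of u n in C n
    have habs : |Real.sqrt n * (Sn n (u n) - 1/2)| ≤ z * σn n (u n) := by
      rw [hdecomp n (u n)]
      have h1 : E + W + G = E + (G + f*Y) + (δ - z*σ) := by
        linear_combination -hfY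
      calc |E + W + G| = |E + (G + f*Y) + (δ - z*σ)| := by rw [h1]
        _ ≤ z * σ - δ/2 := by
            have he := abs_lt.mp hE
            have hg := abs_le.mp hcY
            rw [abs_le]
            constructor <;> nlinarith [hσ, hz]
        _ ≤ z * σn n (u n) := by linarith
    have humem : u n ∈ C n := by
      rw [hC n]
      refine ⟨huab1, ?_⟩
      rw [le_div_iff₀ hs0]
      rw [abs_mul, abs_of_pos hs0, mul_comm] at habs
      linarith
    have huU : u n ≤ U n := (hU n) ▸ le_csSup (hCbdd n) humem
    have hge : (W + z*σ - δ)/f ≤ Real.sqrt n * (U n - m) := by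
      rw [← huv n hn1]
      exact mul_le_mul_of_nonneg_left (by linarith) (Real.sqrt_nonneg _)
    have hdiff : (W + z*σ - δ)/f = (W + z*σ)/f - δ/f := by ring
    have hδf : δ/f ≤ ε/2 := by
      rw [div_le_iff₀ hf]
      nlinarith
    have : -ε < (W + z*σ)/f - δ/f - (W + z*σ)/f := by
      have : 0 < ε/2 := by positivity
      linarith
    linarith [hge, hdiff ▸ hge]
  filter_upwards [hup, hlow] with n h1 h2
  rw [Real.dist_eq, sub_zero, abs_lt]
  exact ⟨h2, h1⟩
end

section
/- Under the stated assumptions, the lower confidence limit admits the asymptotic representation √n·(L_n − m) − (√n·(S_n(m) − 1/2) − z·σ)/f → 0 as n → ∞. (This is the intermediate expansion of the lower Brookmeyer–Crowley limit used in the proof of Proposition 1; the empirical-process term √n·(S_n(m) − 1/2) appearing here cancels against the corresponding term in the upper limit.) -/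
open Filter Topology

set_option maxHeartbeats 1000000 in
theorem lower_limit_expansion
    (a m b f σ z : ℝ) (hab : a < m) (hmb : m < b)
    (hf : 0 < f) (hσ : 0 < σ) (hz : 0 < z)
    (S : ℝ → ℝ)
    (hScont : ContinuousOn S (Set.Icc a b))
    (hSanti : StrictAntiOn S (Set.Icc a b))
    (hSm : S m = 1/2)
    (hSderiv : HasDerivAt S (-f) m)
    (Sn σn : ℕ → ℝ → ℝ)
    (hunif : TendstoUniformlyOn Sn S atTop (Set.Icc a b))
    (hequi : ∀ t : ℕ → ℝ, Tendsto t atTop (𝓝 m) →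
      Tendsto (fun n : ℕ => Real.sqrt n * ((Sn n (t n) - S (t n)) - (Sn n m - 1/2)))
        atTop (𝓝 0))
    (hbdd : ∃ M : ℝ, ∀ n : ℕ, |Real.sqrt n * (Sn n m - 1/2)| ≤ M)
    (hσconv : ∀ t : ℕ → ℝ, Tendsto t atTop (𝓝 m) →
      Tendsto (fun n => σn n (t n)) atTop (𝓝 σ))
    (hσbdd : ∃ B : ℝ, ∀ n, ∀ t ∈ Set.Icc a b, 0 ≤ σn n t ∧ σn n t ≤ B)
    (hSmono : ∀ n, AntitoneOn (Sn n) (Set.Icc a b))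
    (C : ℕ → Set ℝ)
    (hC : ∀ n, C n = {t | t ∈ Set.Icc a b ∧ |Sn n t - 1/2| ≤ z * σn n t / Real.sqrt n})
    (hCne : ∀ n, (C n).Nonempty)
    (L U : ℕ → ℝ)
    (hL : ∀ n, L n = sInf (C n))
    (hU : ∀ n, U n = sSup (C n)) :
    Tendsto
      (fun n : ℕ => Real.sqrt n * (L n - m) - (Real.sqrt n * (Sn n m - 1/2) - z * σ) / f)
      atTop (𝓝 0) := by
  classical
  obtain ⟨M, hM⟩ := hbdd
  obtain ⟨B, hB⟩ := hσbdd
  have hmab : m ∈ Set.Icc a b := ⟨hab.le, hmb.le⟩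
  have hMnn : 0 ≤ M := le_trans (abs_nonneg _) (hM 0)
  have hBnn : 0 ≤ B := le_trans (hB 0 m hmab).1 (hB 0 m hmab).2
  -- √n → ∞
  have hsqrt_top : Tendsto (fun n : ℕ => Real.sqrt n) atTop atTop := by
    rw [tendsto_atTop_atTop]
    intro c
    refine ⟨(⌈c⌉₊) ^ 2, fun n hn => ?_⟩
    have h1 : ((⌈c⌉₊ : ℝ)) ^ 2 ≤ (n : ℝ) := by exact_mod_cast hn
    calc c ≤ (⌈c⌉₊ : ℝ) := Nat.le_ceil c
      _ = Real.sqrt (((⌈c⌉₊ : ℝ)) ^ 2) := (Real.sqrt_sq (Nat.cast_nonneg _)).symm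
      _ ≤ Real.sqrt n := Real.sqrt_le_sqrt h1
  have hinvsqrt : Tendsto (fun n : ℕ => (Real.sqrt n)⁻¹) atTop (𝓝 0) :=
    hsqrt_top.inv_tendsto_atTop
  have hev1 : ∀ᶠ n : ℕ in atTop, 0 < Real.sqrt n :=
    hsqrt_top.eventually_gt_atTop 0
  -- membership in C n
  have hCmem : ∀ n t, t ∈ C n →
      t ∈ Set.Icc a b ∧ |Sn n t - 1/2| ≤ z * σn n t / Real.sqrt n := by
    intro n t ht; rw [hC n] at ht; exact ht
  have hCmem' : ∀ n t, t ∈ Set.Icc a b → |Sn n t - 1/2| ≤ z * σn n t / Real.sqrt n →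
      t ∈ C n := by
    intro n t h1 h2; rw [hC n]; exact ⟨h1, h2⟩
  have hCsub : ∀ n, C n ⊆ Set.Icc a b := fun n t ht => (hCmem n t ht).1
  have hCbdd : ∀ n, BddBelow (C n) := fun n => ⟨a, fun t ht => (hCsub n ht).1⟩
  -- choice of near-infimum points
  have hchoice : ∀ n : ℕ, ∃ t ∈ C n, t < sInf (C n) + 1 / (n + 1 : ℝ) :=
    fun n => Real.lt_sInf_add_pos (hCne n) (by positivity)
  choose s hsC hslt using hchoice
  have hsab : ∀ n, s n ∈ Set.Icc a b := fun n => hCsub n (hsC n)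
  have hLle : ∀ n, L n ≤ s n := fun n => (hL n) ▸ csInf_le (hCbdd n) (hsC n)
  have hsLlt : ∀ n, s n - L n < 1 / (n + 1 : ℝ) := by
    intro n; have h := hslt n; rw [hL n]; linarith
  -- slope function
  set g : ℝ → ℝ := fun t => if t = m then -f else (S t - S m) / (t - m) with hgdef
  have hgeq : ∀ t, S t - S m = (t - m) * g t := by
    intro t
    by_cases h : t = m
    · simp [hgdef, h]
    · have ht : t - m ≠ 0 := sub_ne_zero.mpr h
      simp only [hgdef, if_neg h]
      field_simp
  have hgt : Tendsto g (𝓝 m) (𝓝 (-f)) := by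
    rw [← nhdsNE_sup_pure m]
    refine tendsto_sup.mpr ⟨?_, ?_⟩
    · refine Tendsto.congr' ?_ (hasDerivAt_iff_tendsto_slope.mp hSderiv)
      filter_upwards [self_mem_nhdsWithin] with t ht
      have hne : t ≠ m := ht
      rw [slope_def_field]
      simp [hgdef, hne]
    · have hgm : g m = -f := by simp [hgdef]
      rw [← hgm]
      exact tendsto_pure_nhds g m
  -- the key algebraic identity
  have hkeygen : ∀ (n : ℕ) (x : ℝ), Real.sqrt n * (Sn n x - 1/2)
      = Real.sqrt n * ((Sn n x - S x) - (Sn n m - 1/2)) + Real.sqrt n * (Sn n m - 1/2)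
        + Real.sqrt n * (x - m) * g x := by
    intro n x
    have h : S x - 1/2 = (x - m) * g x := by rw [← hSm]; exact hgeq x
    linear_combination Real.sqrt n * h
  -- r and its properties
  set r : ℕ → ℝ := fun n => (Real.sqrt n * (Sn n m - 1/2) - z * σ) / f with hrdef
  have hre : ∀ n, f * r n = Real.sqrt n * (Sn n m - 1/2) - z * σ := by
    intro n; rw [hrdef]; field_simp
  have hrb : ∀ n, |r n| ≤ (M + z * σ) / f := by
    intro n
    rw [hrdef, abs_div, abs_of_pos hf]
    gcongr
    calc |Real.sqrt n * (Sn n m - 1/2) - z * σ|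
        ≤ |Real.sqrt n * (Sn n m - 1/2)| + |z * σ| := abs_sub _ _
      _ ≤ M + z * σ := by
          have h1 := hM n
          have h2 : |z * σ| = z * σ := abs_of_pos (mul_pos hz hσ)
          linarith
  -- product of bounded and null sequences
  have hmul0 : ∀ (u v : ℕ → ℝ) (K : ℝ), (∀ᶠ n in atTop, |u n| ≤ K) →
      Tendsto v atTop (𝓝 0) → Tendsto (fun n => u n * v n) atTop (𝓝 0) := by
    intro u v K hu hv
    apply squeeze_zero_norm' (a := fun n => K * |v n|)
    · filter_upwards [hu] with n hn
      rw [Real.norm_eq_abs, abs_mul]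
      exact mul_le_mul_of_nonneg_right hn (abs_nonneg _)
    · have := hv.abs.const_mul K
      simpa using this
  -- C n shrinks to m
  have hCsmall : ∀ δ : ℝ, 0 < δ → ∀ᶠ n in atTop, ∀ t ∈ C n, |t - m| < δ := by
    intro δ hδ
    set δ₀ : ℝ := min δ (min (m - a) (b - m)) / 2 with hδ₀def
    have hA1 : min δ (min (m - a) (b - m)) ≤ δ := min_le_left _ _
    have hB1 : min δ (min (m - a) (b - m)) ≤ m - a :=
      (min_le_right _ _).trans (min_le_left _ _)
    have hB2 : min δ (min (m - a) (b - m)) ≤ b - m :=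
      (min_le_right _ _).trans (min_le_right _ _)
    have hδ₀pos : 0 < δ₀ := by
      have : 0 < min δ (min (m - a) (b - m)) :=
        lt_min hδ (lt_min (by linarith) (by linarith))
      rw [hδ₀def]; linarith
    have hm1 : m - δ₀ ∈ Set.Icc a b := ⟨by rw [hδ₀def]; linarith, by rw [hδ₀def]; linarith⟩
    have hm2 : m + δ₀ ∈ Set.Icc a b := ⟨by rw [hδ₀def]; linarith, by rw [hδ₀def]; linarith⟩
    have hc₁ : 0 < S (m - δ₀) - 1/2 := by
      have h := hSanti hm1 hmab (by linarith)
      rw [hSm] at h; linarith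
    have hc₂ : 0 < 1/2 - S (m + δ₀) := by
      have h := hSanti hmab hm2 (by linarith)
      rw [hSm] at h; linarith
    set c : ℝ := min (S (m - δ₀) - 1/2) (1/2 - S (m + δ₀)) with hcdef
    have hc : 0 < c := lt_min hc₁ hc₂
    have hcc₁ : c ≤ S (m - δ₀) - 1/2 := min_le_left _ _
    have hcc₂ : c ≤ 1/2 - S (m + δ₀) := min_le_right _ _
    have E1 := (Metric.tendstoUniformlyOn_iff.mp hunif) (c/2) (by positivity)
    have E2 : ∀ᶠ n : ℕ in atTop, z * B * (Real.sqrt n)⁻¹ < c / 2 := by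
      have h := hinvsqrt.const_mul (z * B)
      simp only [mul_zero] at h
      exact h.eventually (eventually_lt_nhds (by positivity))
    filter_upwards [E1, E2, hev1] with n h1 h2 h3
    intro t htC
    obtain ⟨htab, htle⟩ := hCmem n t htC
    have htB : z * σn n t / Real.sqrt n ≤ z * B * (Real.sqrt n)⁻¹ := by
      rw [div_eq_mul_inv]
      apply mul_le_mul_of_nonneg_right _ (inv_nonneg.mpr (Real.sqrt_nonneg _))
      exact mul_le_mul_of_nonneg_left (hB n t htab).2 hz.le
    have htsmall : |Sn n t - 1/2| < c / 2 := lt_of_le_of_lt (htle.trans htB) h2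
    by_contra hcon
    push_neg at hcon
    rcases le_abs.mp hcon with h | h
    · -- t ≥ m + δ ≥ m + δ₀
      have htge : m + δ₀ ≤ t := by
        have : δ₀ < δ := by rw [hδ₀def]; linarith
        linarith
      have hmono := hSmono n hm2 htab htge
      have hd := h1 (m + δ₀) hm2
      rw [Real.dist_eq] at hd
      have hd' := abs_lt.mp hd
      have : Sn n t - 1/2 < -(c/2) := by linarith [hd'.1, hd'.2]
      have : c/2 < |Sn n t - 1/2| := lt_of_lt_of_le (by linarith) (neg_le_abs _)
      linarith
    · -- t ≤ m - δ ≤ m - δ₀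
      have htle' : t ≤ m - δ₀ := by
        have : δ₀ < δ := by rw [hδ₀def]; linarith
        linarith
      have hmono := hSmono n htab hm1 htle'
      have hd := h1 (m - δ₀) hm1
      rw [Real.dist_eq] at hd
      have hd' := abs_lt.mp hd
      have : c/2 < Sn n t - 1/2 := by linarith [hd'.1, hd'.2]
      have : c/2 < |Sn n t - 1/2| := lt_of_lt_of_le this (le_abs_self _)
      linarith
  -- s n → m
  have hsm : Tendsto s atTop (𝓝 m) := by
    rw [Metric.tendsto_nhds]
    intro ε hε
    filter_upwards [hCsmall ε hε] with n hn
    rw [Real.dist_eq]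
    exact hn (s n) (hsC n)
  have hDs := hequi s hsm
  have hσs := hσconv s hsm
  have hgs : Tendsto (fun n => g (s n)) atTop (𝓝 (-f)) := hgt.comp hsm
  have hgsf : Tendsto (fun n => g (s n) + f) atTop (𝓝 0) := by
    have := hgs.add_const f
    simpa using this
  -- abbreviations
  set w : ℕ → ℝ := fun n => Real.sqrt n * (s n - m) with hwdef
  set A : ℕ → ℝ := fun n => Real.sqrt n * (Sn n (s n) - 1/2) with hAdef
  set D : ℕ → ℝ := fun n => Real.sqrt n * ((Sn n (s n) - S (s n)) - (Sn n m - 1/2))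
    with hDdef
  set q : ℕ → ℝ := fun n => Real.sqrt n * (s n - L n) with hqdef
  have hkey : ∀ n, A n = D n + Real.sqrt n * (Sn n m - 1/2) + w n * g (s n) := by
    intro n
    simp only [hAdef, hDdef, hwdef]
    exact hkeygen n (s n)
  -- q → 0
  have hq0 : Tendsto q atTop (𝓝 0) := by
    have htail : Tendsto (fun n : ℕ => Real.sqrt n * (1 / (n + 1 : ℝ))) atTop (𝓝 0) := by
      apply squeeze_zero' (g := fun n : ℕ => (Real.sqrt n)⁻¹)
      · filter_upwards with n; positivity
      · filter_upwards [hev1] with n hn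
        have hsq : Real.sqrt n * Real.sqrt n = (n : ℝ) :=
          Real.mul_self_sqrt (Nat.cast_nonneg n)
        rw [mul_one_div, div_le_iff₀ (by positivity : (0:ℝ) < (n : ℝ) + 1),
          inv_mul_eq_div, le_div_iff₀ hn, hsq]
        have : (0:ℝ) ≤ (n : ℝ) := Nat.cast_nonneg n
        linarith
      · exact hinvsqrt
    apply squeeze_zero' (g := fun n : ℕ => Real.sqrt n * (1 / (n + 1 : ℝ)))
    · filter_upwards with n
      exact mul_nonneg (Real.sqrt_nonneg _) (by linarith [hLle n])
    · filter_upwards with n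
      exact mul_le_mul_of_nonneg_left (hsLlt n).le (Real.sqrt_nonneg _)
    · exact htail
  -- |A n| ≤ z σn(s n) eventually
  have hAσ : ∀ᶠ n in atTop, |A n| ≤ z * σn n (s n) := by
    filter_upwards [hev1] with n hn
    have hmem := (hCmem n (s n) (hsC n)).2
    simp only [hAdef]
    rw [abs_mul, abs_of_pos hn]
    calc Real.sqrt n * |Sn n (s n) - 1/2|
        ≤ Real.sqrt n * (z * σn n (s n) / Real.sqrt n) :=
          mul_le_mul_of_nonneg_left hmem hn.le
      _ = z * σn n (s n) := by field_simp
  have hAb : ∀ᶠ n in atTop, |A n| ≤ z * B := by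
    filter_upwards [hAσ] with n hn
    exact hn.trans (mul_le_mul_of_nonneg_left (hB n (s n) (hsab n)).2 hz.le)
  -- |w n| eventually bounded
  have hDabs : Tendsto (fun n => |D n|) atTop (𝓝 0) := by
    have := hDs.abs; simpa [hDdef] using this
  have hD1 : ∀ᶠ n in atTop, |D n| < 1 := hDabs.eventually (eventually_lt_nhds one_pos)
  have hgev : ∀ᶠ n in atTop, g (s n) < -(f/2) :=
    hgs.eventually (eventually_lt_nhds (by linarith))
  have hwbdd : ∀ᶠ n in atTop, |w n| ≤ (z * B + 1 + M) / (f / 2) := by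
    filter_upwards [hAb, hD1, hgev] with n h1 h2 h3
    have hwg : w n * g (s n) = A n - D n - Real.sqrt n * (Sn n m - 1/2) := by
      have := hkey n; linarith
    have h4 : |w n * g (s n)| ≤ z * B + 1 + M := by
      rw [hwg]
      calc |A n - D n - Real.sqrt n * (Sn n m - 1/2)|
          ≤ |A n - D n| + |Real.sqrt n * (Sn n m - 1/2)| := abs_sub _ _
        _ ≤ |A n| + |D n| + |Real.sqrt n * (Sn n m - 1/2)| := by
            have := abs_sub (A n) (D n); linarith
        _ ≤ z * B + 1 + M := by have := hM n; linarith
    have h5 : f / 2 ≤ |g (s n)| := by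
      have : f / 2 < -(g (s n)) := by linarith
      calc f / 2 ≤ -(g (s n)) := this.le
        _ ≤ |g (s n)| := neg_le_abs _
    rw [le_div_iff₀ (by linarith : (0:ℝ) < f / 2)]
    calc |w n| * (f / 2) ≤ |w n| * |g (s n)| :=
          mul_le_mul_of_nonneg_left h5 (abs_nonneg _)
      _ = |w n * g (s n)| := (abs_mul _ _).symm
      _ ≤ z * B + 1 + M := h4
  -- Claim A : eventual upper bound for √n (L n - m)
  have claimA : ∀ ε' : ℝ, 0 < ε' → f * ε' < 2 * (z * σ) →
      ∀ᶠ n : ℕ in atTop, Real.sqrt n * (L n - m) ≤ r n + ε' := by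
    intro ε' hε' hε'2
    set t' : ℕ → ℝ := fun n => m + (r n + ε') / Real.sqrt n with ht'def
    have hrbe : ∀ n, |r n + ε'| ≤ (M + z * σ) / f + ε' := by
      intro n
      calc |r n + ε'| ≤ |r n| + |ε'| := abs_add_le _ _
        _ ≤ (M + z * σ) / f + ε' := by
            have := hrb n; rw [abs_of_pos hε']; linarith
    have ht'm : Tendsto t' atTop (𝓝 m) := by
      have hsub : Tendsto (fun n => t' n - m) atTop (𝓝 0) := by
        apply squeeze_zero_norm' (a := fun n : ℕ => ((M + z * σ) / f + ε') * (Real.sqrt n)⁻¹)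
        · filter_upwards with n
          simp only [ht'def, add_sub_cancel_left]
          rw [Real.norm_eq_abs, abs_div, div_eq_mul_inv,
            abs_of_nonneg (Real.sqrt_nonneg _)]
          exact mul_le_mul_of_nonneg_right (hrbe n) (inv_nonneg.mpr (Real.sqrt_nonneg _))
        · have := hinvsqrt.const_mul ((M + z * σ) / f + ε')
          simpa using this
      have := hsub.add_const m
      simpa using this
    have ht'ab : ∀ᶠ n in atTop, t' n ∈ Set.Icc a b :=
      ht'm.eventually_mem (Icc_mem_nhds hab hmb)
    have hD' := hequi t' ht'm
    have hσ' := hσconv t' ht'm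
    have hg' : Tendsto (fun n => g (t' n)) atTop (𝓝 (-f)) := hgt.comp ht'm
    have hg'f : Tendsto (fun n => g (t' n) + f) atTop (𝓝 0) := by
      have := hg'.add_const f; simpa using this
    have hwt' : ∀ᶠ n : ℕ in atTop, Real.sqrt n * (t' n - m) = r n + ε' := by
      filter_upwards [hev1] with n hn
      simp only [ht'def, add_sub_cancel_left]
      field_simp
    have hterm : Tendsto (fun n => (r n + ε') * (g (t' n) + f)) atTop (𝓝 0) :=
      hmul0 _ _ ((M + z * σ) / f + ε') (Eventually.of_forall hrbe) hg'f
    have hA' : Tendsto (fun n : ℕ => Real.sqrt n * (Sn n (t' n) - 1/2)) atTop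
        (𝓝 (z * σ - f * ε')) := by
      have base : Tendsto (fun n : ℕ =>
          Real.sqrt n * ((Sn n (t' n) - S (t' n)) - (Sn n m - 1/2))
          + (z * σ - f * ε' + (r n + ε') * (g (t' n) + f))) atTop
          (𝓝 (0 + (z * σ - f * ε' + 0))) :=
        hD'.add (tendsto_const_nhds.add hterm)
      rw [show (0 : ℝ) + (z * σ - f * ε' + 0) = z * σ - f * ε' by ring] at base
      refine Tendsto.congr' ?_ base
      filter_upwards [hwt'] with n hn
      rw [hkeygen n (t' n), hn]
      linear_combination hre n
    have hpos : 0 < z * σ - |z * σ - f * ε'| := by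
      have hfε : 0 < f * ε' := mul_pos hf hε'
      have : |z * σ - f * ε'| < z * σ := by
        rw [abs_lt]; constructor <;> linarith
      linarith
    have hσ't : Tendsto (fun n : ℕ => z * σn n (t' n) - |Real.sqrt n * (Sn n (t' n) - 1/2)|)
        atTop (𝓝 (z * σ - |z * σ - f * ε'|)) := (hσ'.const_mul z).sub hA'.abs
    have hevmem : ∀ᶠ n : ℕ in atTop,
        0 < z * σn n (t' n) - |Real.sqrt n * (Sn n (t' n) - 1/2)| :=
      hσ't.eventually (eventually_gt_nhds hpos)
    filter_upwards [hevmem, ht'ab, hev1, hwt'] with n h₁ h₂ h₃ h₄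
    have hmem : t' n ∈ C n := by
      apply hCmem' n (t' n) h₂
      rw [le_div_iff₀ h₃, mul_comm]
      rw [abs_mul, abs_of_pos h₃] at h₁
      linarith
    have hLt : L n ≤ t' n := by rw [hL n]; exact csInf_le (hCbdd n) hmem
    calc Real.sqrt n * (L n - m) ≤ Real.sqrt n * (t' n - m) :=
          mul_le_mul_of_nonneg_left (by linarith) (Real.sqrt_nonneg _)
      _ = r n + ε' := h₄
  -- A → zσ
  have hAlim : Tendsto A atTop (𝓝 (z * σ)) := by
    rw [Metric.tendsto_nhds]
    intro ε hε
    have hup : ∀ᶠ n in atTop, A n < z * σ + ε := by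
      have h1 : Tendsto (fun n => z * σn n (s n)) atTop (𝓝 (z * σ)) := hσs.const_mul z
      filter_upwards [h1.eventually (eventually_lt_nhds (by linarith : z * σ < z * σ + ε)),
        hAσ] with n hn1 hn2
      calc A n ≤ |A n| := le_abs_self _
        _ ≤ z * σn n (s n) := hn2
        _ < z * σ + ε := hn1
    have hε' : (0:ℝ) < min (ε / (4 * f)) (z * σ / (2 * f)) := by positivity
    set ε' : ℝ := min (ε / (4 * f)) (z * σ / (2 * f)) with hε'def
    have hε'1 : ε' ≤ ε / (4 * f) := min_le_left _ _
    have hε'2 : ε' ≤ z * σ / (2 * f) := min_le_right _ _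
    have hfε'1 : f * ε' ≤ ε / 4 := by
      have := mul_le_mul_of_nonneg_left hε'1 hf.le
      calc f * ε' ≤ f * (ε / (4 * f)) := this
        _ = ε / 4 := by field_simp
    have hfε'2 : f * ε' < 2 * (z * σ) := by
      have := mul_le_mul_of_nonneg_left hε'2 hf.le
      have h2 : f * (z * σ / (2 * f)) = z * σ / 2 := by field_simp
      nlinarith [mul_pos hz hσ]
    have hclaim := claimA ε' hε' hfε'2
    have hterm2 : Tendsto (fun n => (r n + 2 * ε') * (g (s n) + f)) atTop (𝓝 0) := by
      apply hmul0 _ _ ((M + z * σ) / f + 2 * ε') _ hgsf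
      filter_upwards with n
      calc |r n + 2 * ε'| ≤ |r n| + |2 * ε'| := abs_add_le _ _
        _ ≤ (M + z * σ) / f + 2 * ε' := by
            have := hrb n
            rw [abs_of_pos (by linarith : (0:ℝ) < 2 * ε')]
            linarith
    have htermsmall : ∀ᶠ n in atTop, |(r n + 2 * ε') * (g (s n) + f)| < ε / 8 := by
      have := hterm2.abs
      simp only [abs_zero] at this
      exact this.eventually (eventually_lt_nhds (by positivity))
    have hDsmall : ∀ᶠ n in atTop, |D n| < ε / 8 :=
      hDabs.eventually (eventually_lt_nhds (by positivity))
    have hqsmall : ∀ᶠ n in atTop, q n < ε' := by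
      have := (Metric.tendsto_nhds.mp hq0) ε' hε'
      filter_upwards [this] with n hn
      rw [Real.dist_eq, sub_zero] at hn
      exact lt_of_le_of_lt (le_abs_self _) hn
    have hlow : ∀ᶠ n in atTop, z * σ - ε < A n := by
      filter_upwards [hclaim, hqsmall, hgev, hDsmall, htermsmall] with n h1 h2 h3 h4 h5
      have hw : w n ≤ r n + 2 * ε' := by
        have hq : Real.sqrt n * (s n - L n) < ε' := h2
        have : w n = Real.sqrt n * (L n - m) + Real.sqrt n * (s n - L n) := by
          simp only [hwdef]; ring
        linarith
      have hwg : w n * g (s n) ≥ (r n + 2 * ε') * g (s n) :=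
        mul_le_mul_of_nonpos_right hw (by linarith)
      have hexp : (r n + 2 * ε') * g (s n)
          = -(f * r n) - 2 * (f * ε') + (r n + 2 * ε') * (g (s n) + f) := by ring
      have hA : A n = D n + Real.sqrt n * (Sn n m - 1/2) + w n * g (s n) := hkey n
      have hre' := hre n
      have h5' : -(ε / 8) < (r n + 2 * ε') * (g (s n) + f) := by
        have := neg_abs_le ((r n + 2 * ε') * (g (s n) + f)); linarith
      have h4' : -(ε / 8) < D n := by
        have := neg_abs_le (D n); linarith
      nlinarith
    filter_upwards [hup, hlow] with n h1 h2
    rw [Real.dist_eq, abs_lt]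
    constructor <;> linarith
  -- final assembly
  have hALim0 : Tendsto (fun n => z * σ - A n) atTop (𝓝 0) := by
    simpa using hAlim.const_sub (z * σ)
  have hwf : Tendsto (fun n => w n * (f + g (s n))) atTop (𝓝 0) := by
    apply hmul0 _ _ ((z * B + 1 + M) / (f / 2)) hwbdd
    have := hgsf
    refine this.congr fun n => by ring
  have hnum : Tendsto (fun n => (w n * (f + g (s n)) + D n + (z * σ - A n)) / f - q n)
      atTop (𝓝 ((0 + 0 + 0) / f - 0)) := by
    refine Tendsto.sub ?_ hq0
    exact ((hwf.add (by simpa [hDdef] using hDs)).add hALim0).div_const f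
  rw [show ((0:ℝ) + 0 + 0) / f - 0 = 0 by ring] at hnum
  refine Tendsto.congr ?_ hnum
  intro n
  have h := hkey n
  have h3 := hre n
  have h2 : Real.sqrt n * (L n - m) = w n - q n := by
    simp only [hwdef, hqdef]; ring
  have hwr : w n - r n = (w n * (f + g (s n)) + D n + (z * σ - A n)) / f := by
    rw [eq_div_iff (ne_of_gt hf)]
    linear_combination h - h3
  have : (Real.sqrt n * (Sn n m - 1/2) - z * σ) / f = r n := by rw [hrdef]
  rw [this]
  linarith [hwr, h2]
end

section
/- Let x, y, w be nonnegative reals with Φ(w) = (Φ(x) + Φ(y))/2. Then x + y ≥ 2w. (Interpretation, as in Remark 1 of the paper: if a confidence interval for a normally distributed estimator with standard deviation s has lower tail probability α₁ = 1 − Φ(x) and upper tail probability α₂ = 1 − Φ(y), each at most 1/2, so that its limits are l = m̂ − x·s and u = m̂ + y·s, then the Wald approximation (u − l)/(2·z_{1−α/2}) = s·(x + y)/(2w) with total miscoverage α = α₁ + α₂ is at least s; i.e., the Wald approximation overestimates the standard error under unequal tail probabilities.) -/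
noncomputable def stdNormalCDF (x : ℝ) : ℝ :=
  ∫ u in Set.Iic x, (Real.sqrt (2 * Real.pi))⁻¹ * Real.exp (-u ^ 2 / 2)

open Real MeasureTheory intervalIntegral Set

lemma phi_integrable :
    Integrable (fun u : ℝ => (Real.sqrt (2 * Real.pi))⁻¹ * Real.exp (-u ^ 2 / 2)) := by
  have h := (integrable_exp_neg_mul_sq (b := (1:ℝ)/2) (by norm_num)).const_mul
    (Real.sqrt (2 * Real.pi))⁻¹
  convert h using 2 with u
  ring_nf

lemma phi_continuous :
    Continuous (fun u : ℝ => (Real.sqrt (2 * Real.pi))⁻¹ * Real.exp (-u ^ 2 / 2)) := by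
  continuity

lemma stdNormalCDF_hasDerivAt (t : ℝ) :
    HasDerivAt stdNormalCDF ((Real.sqrt (2 * Real.pi))⁻¹ * Real.exp (-t ^ 2 / 2)) t := by
  set φ := fun u : ℝ => (Real.sqrt (2 * Real.pi))⁻¹ * Real.exp (-u ^ 2 / 2) with hφ
  have key : ∀ s : ℝ, stdNormalCDF s = stdNormalCDF 0 + ∫ u in (0:ℝ)..s, φ u := by
    intro s
    have := integral_Iic_sub_Iic (f := φ) (μ := volume)
      phi_integrable.integrableOn phi_integrable.integrableOn (a := 0) (b := s)
    simp only [stdNormalCDF]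
    linarith [this]
  have hderiv : HasDerivAt (fun s => stdNormalCDF 0 + ∫ u in (0:ℝ)..s, φ u) (φ t) t := by
    have h1 : HasDerivAt (fun s => ∫ u in (0:ℝ)..s, φ u) (φ t) t :=
      integral_hasDerivAt_right (phi_integrable.intervalIntegrable)
        phi_continuous.aestronglyMeasurable.stronglyMeasurableAtFilter
        phi_continuous.continuousAt
    simpa using h1.const_add (stdNormalCDF 0)
  exact hderiv.congr_of_eventuallyEq (Filter.Eventually.of_forall fun s => (key s))

lemma stdNormalCDF_deriv (t : ℝ) :
    deriv stdNormalCDF t = (Real.sqrt (2 * Real.pi))⁻¹ * Real.exp (-t ^ 2 / 2) :=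
  (stdNormalCDF_hasDerivAt t).deriv

lemma stdNormalCDF_strictMono : StrictMono stdNormalCDF := by
  apply strictMono_of_deriv_pos
  intro t
  rw [stdNormalCDF_deriv]
  positivity

lemma stdNormalCDF_concave : ConcaveOn ℝ (Set.Ici (0:ℝ)) stdNormalCDF := by
  apply AntitoneOn.concaveOn_of_deriv (convex_Ici 0)
  · exact (continuous_iff_continuousAt.mpr
      fun t => (stdNormalCDF_hasDerivAt t).differentiableAt.continuousAt).continuousOn
  · exact fun t _ => (stdNormalCDF_hasDerivAt t).differentiableAt.differentiableWithinAt
  · intro a ha b hb hab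
    rw [interior_Ici] at ha hb
    rw [stdNormalCDF_deriv, stdNormalCDF_deriv]
    apply mul_le_mul_of_nonneg_left _ (by positivity)
    apply Real.exp_le_exp.mpr
    have : a ^ 2 ≤ b ^ 2 := by nlinarith [le_of_lt (Set.mem_Ioi.mp ha)]
    linarith

theorem wald_overestimates
    (x y w : ℝ) (hx : 0 ≤ x) (hy : 0 ≤ y) (hw : 0 ≤ w)
    (h : stdNormalCDF w = (stdNormalCDF x + stdNormalCDF y) / 2) :
    2 * w ≤ x + y := by
  have hc := stdNormalCDF_concave.2 (Set.mem_Ici.mpr hx) (Set.mem_Ici.mpr hy)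
    (by norm_num : (0:ℝ) ≤ (1:ℝ)/2) (by norm_num : (0:ℝ) ≤ (1:ℝ)/2) (by norm_num)
  simp only [smul_eq_mul] at hc
  have hle : stdNormalCDF w ≤ stdNormalCDF ((x + y) / 2) := by
    rw [h]
    calc (stdNormalCDF x + stdNormalCDF y) / 2
        = 1/2 * stdNormalCDF x + 1/2 * stdNormalCDF y := by ring
      _ ≤ stdNormalCDF (1/2 * x + 1/2 * y) := hc
      _ = stdNormalCDF ((x + y) / 2) := by ring_nf
  have := stdNormalCDF_strictMono.le_iff_le.mp hle
  linarith
end
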